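/- For the Cayley transform C on the ball B, the Euclidean norm identity holds: if (X',Z',t') = C(X,Z,t) and (X,Z,t) ∈ B, then t' - (1/4)|X'|² = (1 - |X|² - |Z|² - t²)/((1-t)² + |Z|²); in particular this quantity is positive, giving C(B) ⊆ D. -/
import Mathlib


open RealInnerProductSpace

/-- The Cayley transform
`C(X,Z,t) = ((1-t)²+|Z|²)⁻¹ (2((1-t)X + J_Z X), 2Z, 1-t²-|Z|²)`. -/
noncomputable def cayley {V Z : Type*}
    [NormedAddCommGroup V] [InnerProductSpace ℝ V]
    [NormedAddCommGroup Z] [InnerProductSpace ℝ Z]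
    (J : Z →ₗ[ℝ] V →ₗ[ℝ] V) (p : V × Z × ℝ) : V × Z × ℝ :=
  (((1 - p.2.2) ^ 2 + ‖p.2.1‖ ^ 2)⁻¹ •
      ((2 : ℝ) • ((1 - p.2.2) • p.1 + J p.2.1 p.1)),
   ((1 - p.2.2) ^ 2 + ‖p.2.1‖ ^ 2)⁻¹ • ((2 : ℝ) • p.2.1),
   ((1 - p.2.2) ^ 2 + ‖p.2.1‖ ^ 2)⁻¹ * (1 - p.2.2 ^ 2 - ‖p.2.1‖ ^ 2))


lemma J_inner_J {V Z : Type*} [NormedAddCommGroup V] [InnerProductSpace ℝ V]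
    [NormedAddCommGroup Z] [InnerProductSpace ℝ Z]
    (J : Z →ₗ[ℝ] V →ₗ[ℝ] V)
    (hJnorm : ∀ (z : Z) (x : V), ‖J z x‖ = ‖z‖ * ‖x‖)
    (z : Z) (a b : V) : ⟪J z a, J z b⟫ = ‖z‖ ^ 2 * ⟪a, b⟫ := by
  have h1 : ‖J z a + J z b‖ ^ 2 = ‖J z a‖ ^ 2 + 2 * ⟪J z a, J z b⟫ + ‖J z b‖ ^ 2 :=
    norm_add_sq_real _ _
  have h2 : J z a + J z b = J z (a + b) := (map_add _ _ _).symm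
  rw [h2, hJnorm, hJnorm, hJnorm, mul_pow, mul_pow, mul_pow, norm_add_sq_real a b] at h1
  nlinarith [h1]

lemma J_orth {V Z : Type*} [NormedAddCommGroup V] [InnerProductSpace ℝ V]
    [NormedAddCommGroup Z] [InnerProductSpace ℝ Z]
    (J : Z →ₗ[ℝ] V →ₗ[ℝ] V)
    (hsq : ∀ (z : Z) (x : V), J z (J z x) = -(‖z‖ ^ 2) • x)
    (hJnorm : ∀ (z : Z) (x : V), ‖J z x‖ = ‖z‖ * ‖x‖)
    (z : Z) (x : V) : ⟪J z x, x⟫ = 0 := by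
  rcases eq_or_ne z 0 with rfl | hz
  · simp
  · have h := J_inner_J J hJnorm z x (J z x)
    rw [hsq, real_inner_smul_right, real_inner_comm x (J z x)] at h
    have hz' : ‖z‖ ≠ 0 := norm_ne_zero_iff.mpr hz
    have hzn : (0:ℝ) < ‖z‖ ^ 2 := by positivity
    rw [real_inner_comm]
    nlinarith [h]

/-- If `(X',Z',t') = C(X,Z,t)` with `(X,Z,t)` in the unit ball, then
`t' - ¼|X'|² = (1 - |X|² - |Z|² - t²)/((1-t)² + |Z|²) > 0`; hence `C(B) ⊆ D`. -/
theorem cayley_siegel_defect {V Z : Type*}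
    [NormedAddCommGroup V] [InnerProductSpace ℝ V]
    [NormedAddCommGroup Z] [InnerProductSpace ℝ Z]
    (J : Z →ₗ[ℝ] V →ₗ[ℝ] V)
    (hsq : ∀ (z : Z) (x : V), J z (J z x) = -(‖z‖ ^ 2) • x)
    (hJnorm : ∀ (z : Z) (x : V), ‖J z x‖ = ‖z‖ * ‖x‖) :
    ∀ p : V × Z × ℝ, ‖p.1‖ ^ 2 + ‖p.2.1‖ ^ 2 + p.2.2 ^ 2 < 1 →
      ((cayley J p).2.2 - (1 / 4) * ‖(cayley J p).1‖ ^ 2 =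
          (1 - ‖p.1‖ ^ 2 - ‖p.2.1‖ ^ 2 - p.2.2 ^ 2) /
            ((1 - p.2.2) ^ 2 + ‖p.2.1‖ ^ 2)) ∧
      0 < (cayley J p).2.2 - (1 / 4) * ‖(cayley J p).1‖ ^ 2 ∧
      cayley J p ∈ {q : V × Z × ℝ | (1 / 4) * ‖q.1‖ ^ 2 < q.2.2} := by
  intro p hp
  obtain ⟨X, z, t⟩ := p
  simp only [cayley, Set.mem_setOf_eq] at *
  set D : ℝ := (1 - t) ^ 2 + ‖z‖ ^ 2 with hDdef
  have hX : (0:ℝ) ≤ ‖X‖ ^ 2 := by positivity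
  have hzz : (0:ℝ) ≤ ‖z‖ ^ 2 := by positivity
  have hD : 0 < D := by nlinarith
  have hD' : D ≠ 0 := ne_of_gt hD
  have hnorm : ‖(1 - t) • X + J z X‖ ^ 2 = D * ‖X‖ ^ 2 := by
    rw [norm_add_sq_real, hJnorm, real_inner_smul_left,
      real_inner_comm, J_orth J hsq hJnorm, norm_smul]
    simp only [mul_pow, sq_abs, Real.norm_eq_abs, mul_zero, add_zero]
    ring
  have hfull : ‖D⁻¹ • ((2:ℝ) • ((1 - t) • X + J z X))‖ ^ 2 = D⁻¹ * 4 * ‖X‖ ^ 2 := by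
    rw [norm_smul, norm_smul, mul_pow, mul_pow, hnorm]
    simp only [Real.norm_eq_abs, sq_abs]
    field_simp
    ring
  rw [hfull]
  have key : D⁻¹ * (1 - t ^ 2 - ‖z‖ ^ 2) - 1 / 4 * (D⁻¹ * 4 * ‖X‖ ^ 2)
      = (1 - ‖X‖ ^ 2 - ‖z‖ ^ 2 - t ^ 2) / D := by
    field_simp
    ring
  have hpos : 0 < (1 - ‖X‖ ^ 2 - ‖z‖ ^ 2 - t ^ 2) / D :=
    div_pos (by linarith) hD
  exact ⟨key, key ▸ hpos, by nlinarith [key ▸ hpos]⟩
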